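/- For αβ > 1/2 with β > 0, the variance of the two-index Riesz FOU is (1/π) ∫₀^∞ (k^{2β} + λ^{2β})^{−α} dk = Γ(1/(2β)) Γ(α − 1/(2β)) λ^{1−2αβ} / (2πβ Γ(α)). -/

import Mathlib

/-!
Scaling `k = λ t` pulls out the factor `λ ^ (1 - 2αβ)`. The substitution `y = t ^ (2β)` turns the
remaining integral into the beta integral of the second kind `∫₀^∞ y ^ (a - 1) (1 + y) ^ (-(a + b))`
with `a = 1/(2β)`, `b = α - 1/(2β)`, and `x = y / (1 + y)` maps that onto Euler's beta integral
`∫₀¹ x ^ (a - 1) (1 - x) ^ (b - 1) = Γ(a) Γ(b) / Γ(a + b)`.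
-/

open Real MeasureTheory Set

theorem integral_rpow_mul_one_sub_rpow_Ioo {a b : ℝ} (ha : 0 < a) (hb : 0 < b) :
    ∫ x in Ioo (0:ℝ) 1, x ^ (a - 1) * (1 - x) ^ (b - 1) = Gamma a * Gamma b / Gamma (a + b) := by
  have hbeta : Complex.betaIntegral a b
      = ((∫ x in (0:ℝ)..1, x ^ (a - 1) * (1 - x) ^ (b - 1) : ℝ) : ℂ) := by
    rw [Complex.betaIntegral, ← intervalIntegral.integral_ofReal]
    refine intervalIntegral.integral_congr fun x hx => ?_
    rw [uIcc_of_le zero_le_one] at hx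
    push_cast
    rw [Complex.ofReal_cpow hx.1, Complex.ofReal_cpow (sub_nonneg.2 hx.2)]
    push_cast
    rfl
  have h := Complex.betaIntegral_eq_Gamma_mul_div a b (by simpa) (by simpa)
  rw [hbeta, ← Complex.ofReal_add, Complex.Gamma_ofReal, Complex.Gamma_ofReal,
    Complex.Gamma_ofReal] at h
  rw [← integral_Ioc_eq_integral_Ioo, ← intervalIntegral.integral_of_le zero_le_one]
  exact_mod_cast h

theorem integral_rpow_mul_one_add_rpow_neg_Ioi {a b : ℝ} (ha : 0 < a) (hb : 0 < b) :
    ∫ y in Ioi (0:ℝ), y ^ (a - 1) * (1 + y) ^ (-(a + b)) = Gamma a * Gamma b / Gamma (a + b) := by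
  have himg : (fun y : ℝ => y / (1 + y)) '' Ioi 0 = Ioo 0 1 := by
    ext x
    constructor
    · rintro ⟨y, hy : 0 < y, rfl⟩
      exact ⟨by positivity, (div_lt_one (by positivity)).2 (by linarith)⟩
    · rintro ⟨hx0, hx1⟩
      refine ⟨x / (1 - x), div_pos hx0 (by linarith), ?_⟩
      field_simp
      ring
  have hderiv : ∀ y ∈ Ioi (0:ℝ),
      HasDerivWithinAt (fun y : ℝ => y / (1 + y)) ((1 + y) ^ 2)⁻¹ (Ioi 0) y := by
    intro y (hy : 0 < y)
    have h1y : 1 + y ≠ 0 := by linarith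
    have := (hasDerivAt_id y).div ((hasDerivAt_const y 1).add (hasDerivAt_id y)) h1y
    exact this.hasDerivWithinAt.congr_deriv (by simp only [Pi.add_apply, id_eq]; ring)
  have hinj : InjOn (fun y : ℝ => y / (1 + y)) (Ioi 0) := by
    intro y₁ (h₁ : 0 < y₁) y₂ (h₂ : 0 < y₂) he
    field_simp at he
    linarith
  rw [← integral_rpow_mul_one_sub_rpow_Ioo ha hb, ← himg,
    integral_image_eq_integral_abs_deriv_smul measurableSet_Ioi hderiv hinj]
  refine setIntegral_congr_fun measurableSet_Ioi fun y (hy : 0 < y) => ?_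
  have h1y : 0 < 1 + y := by linarith
  have h1 : 1 - y / (1 + y) = (1 + y)⁻¹ := by field_simp; ring
  have h2 : |((1 + y) ^ 2)⁻¹| = (1 + y) ^ (-2 : ℝ) := by
    rw [abs_of_pos (by positivity), rpow_neg h1y.le]
    norm_cast
  simp only [smul_eq_mul, h1, h2]
  rw [div_rpow hy.le h1y.le, inv_rpow h1y.le, div_eq_mul_inv, ← rpow_neg h1y.le (a - 1),
    ← rpow_neg h1y.le (b - 1), show -(a + b) = -2 + (-(a - 1) + -(b - 1)) by ring,
    rpow_add h1y, rpow_add h1y]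
  ring

theorem integral_rpow_add_one_rpow_neg_Ioi {p α : ℝ} (hp : 0 < p) (hpα : 1 / p < α) :
    ∫ t in Ioi (0:ℝ), (t ^ p + 1) ^ (-α) = Gamma (1 / p) * Gamma (α - 1 / p) / (p * Gamma α) := by
  have hbeta := integral_rpow_mul_one_add_rpow_neg_Ioi (one_div_pos.2 hp) (sub_pos.2 hpα)
  rw [add_sub_cancel, ← integral_comp_rpow_Ioi_of_pos hp] at hbeta
  rw [mul_comm p, ← div_div, ← hbeta, eq_div_iff hp.ne', ← integral_mul_const]
  refine setIntegral_congr_fun measurableSet_Ioi fun t (ht : 0 < t) => ?_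
  have hpow : t ^ (p - 1) * (t ^ p) ^ (1 / p - 1) = 1 := by
    rw [← rpow_mul ht.le, ← rpow_add ht, show p - 1 + p * (1 / p - 1) = 0 by field_simp; ring,
      rpow_zero]
  rw [smul_eq_mul, add_comm (t ^ p)]
  linear_combination -(p * (1 + t ^ p) ^ (-α)) * hpow

theorem integral_rpow_add_rpow_rpow_neg_Ioi (p α : ℝ) {c : ℝ} (hc : 0 < c) :
    ∫ k in Ioi (0:ℝ), (k ^ p + c ^ p) ^ (-α)
      = c ^ (1 - p * α) * ∫ t in Ioi (0:ℝ), (t ^ p + 1) ^ (-α) := by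
  have hscale := integral_comp_mul_left_Ioi (fun k => (k ^ p + c ^ p) ^ (-α)) 0 hc
  rw [mul_zero, smul_eq_mul, eq_inv_mul_iff_mul_eq₀ hc.ne'] at hscale
  rw [← hscale, ← integral_const_mul, ← integral_const_mul]
  refine setIntegral_congr_fun measurableSet_Ioi fun t (ht : 0 < t) => ?_
  have hfactor : (c * t) ^ p + c ^ p = c ^ p * (t ^ p + 1) := by
    rw [mul_rpow hc.le ht.le]; ring
  rw [hfactor, mul_rpow (by positivity) (by positivity), ← rpow_mul hc.le,
    show 1 - p * α = 1 + p * -α by ring, rpow_add hc, rpow_one]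
  ring

theorem stmt11 (α β lam : ℝ) (hβ : 0 < β) (hlam : 0 < lam)
    (hαβ : 1/2 < α * β) :
    (1/π) * ∫ k in Set.Ioi (0:ℝ), (k ^ (2*β) + lam ^ (2*β)) ^ (-α)
      = Real.Gamma (1/(2*β)) * Real.Gamma (α - 1/(2*β)) * lam ^ (1 - 2*α*β)
          / (2 * π * β * Real.Gamma α) := by
  have h2β : 0 < 2 * β := by linarith
  have hα : 1 / (2 * β) < α := by
    rw [div_lt_iff₀ h2β]; linarith
  have hGamma : Gamma α ≠ 0 := (Gamma_pos_of_pos ((one_div_pos.2 h2β).trans hα)).ne'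
  rw [integral_rpow_add_rpow_rpow_neg_Ioi _ _ hlam, integral_rpow_add_one_rpow_neg_Ioi h2β hα,
    show 1 - 2 * β * α = 1 - 2 * α * β by ring]
  field_simp
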